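/- arXiv:2308.12044 — 3 statements merged into one kernel-verified Lean document; each statement's English description precedes it below -/
import Mathlib

section
/- Let F_1, ..., F_m : ℝ^n → ℝ be continuously differentiable functions and let θ* ∈ ℝ^n be weakly Pareto optimal for the multiobjective problem min_θ (F_1(θ), ..., F_m(θ)). Then θ* satisfies the Karush-Kuhn-Tucker condition: there exist λ_1, ..., λ_m ≥ 0 with ∑_{i=1}^m λ_i = 1 such that ∑_{i=1}^m λ_i ∇F_i(θ*) = 0. -/
open Filter Topology RealInnerProductSpace

/-- For continuously differentiable objectives, every weakly Pareto optimal point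
satisfies the Karush-Kuhn-Tucker condition. -/
theorem weakly_pareto_optimal_satisfies_kkt
    {n m : ℕ} (F : Fin m → EuclideanSpace ℝ (Fin n) → ℝ)
    (hsmooth : ∀ i, ContDiff ℝ 1 (F i))
    (θs : EuclideanSpace ℝ (Fin n))
    (hweak : ¬ ∃ θ : EuclideanSpace ℝ (Fin n), ∀ i, F i θ < F i θs) :
    ∃ lam : Fin m → ℝ, (∀ i, 0 ≤ lam i) ∧ ∑ i, lam i = 1 ∧
      ∑ i, lam i • gradient (F i) θs = 0 := by
  rcases Nat.eq_zero_or_pos m with hm | hm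
  · subst hm
    exact absurd ⟨θs, fun i => i.elim0⟩ hweak
  classical
  set g : Fin m → EuclideanSpace ℝ (Fin n) := fun i => gradient (F i) θs with hg
  by_contra hc
  -- 0 is not in the convex hull of the gradients
  have h0 : (0 : EuclideanSpace ℝ (Fin n)) ∉ convexHull ℝ (Set.range g) := by
    intro h0
    rw [convexHull_range_eq_exists_affineCombination] at h0
    obtain ⟨s, w, hw0, hw1, hx⟩ := h0
    rw [Finset.affineCombination_eq_linear_combination s g w hw1] at hx
    refine hc ⟨fun i => if i ∈ s then w i else 0, fun i => ?_, ?_, ?_⟩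
    · dsimp only
      split_ifs with h
      · exact hw0 _ h
      · exact le_rfl
    · simpa [Finset.sum_ite_mem, Finset.univ_inter] using hw1
    · have key : ∑ i, (if i ∈ s then w i else 0) • g i = ∑ i ∈ s, w i • g i := by
        rw [← Finset.sum_subset (Finset.subset_univ s) (fun i _ hi => by simp [hi])]
        exact Finset.sum_congr rfl fun i hi => by simp [hi]
      simpa [hg] using key.trans hx
  -- separate 0 from the hull
  obtain ⟨f, u, hfa, hu⟩ := geometric_hahn_banach_closed_point
    (convex_convexHull ℝ _) (((Set.finite_range g).isCompact_convexHull ℝ).isClosed) h0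
  simp only [map_zero] at hu
  -- turn f into a vector d
  set d : EuclideanSpace ℝ (Fin n) := (InnerProductSpace.toDual ℝ (EuclideanSpace ℝ (Fin n))).symm f with hd
  have hfd : ∀ x : EuclideanSpace ℝ (Fin n), f x = (inner ℝ d x : ℝ) := by
    intro x
    rw [hd]
    exact (InnerProductSpace.toDual_symm_apply).symm
  -- each directional derivative along d is negative
  have hneg : ∀ i : Fin m, fderiv ℝ (F i) θs d < 0 := by
    intro i
    have h1 : f (g i) < u := hfa _ (subset_convexHull ℝ _ (Set.mem_range_self i))
    have h2 : f (g i) = fderiv ℝ (F i) θs d := by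
      rw [hfd, hg, real_inner_comm]
      exact InnerProductSpace.toDual_symm_apply
    linarith
  -- for each i, F i decreases along d near 0
  have hev : ∀ i : Fin m, ∀ᶠ t : ℝ in 𝓝[>] 0, F i (θs + t • d) < F i θs := by
    intro i
    have hdiff : HasFDerivAt (F i) (fderiv ℝ (F i) θs) θs :=
      ((hsmooth i).differentiable one_ne_zero θs).hasFDerivAt
    have hcurve : HasDerivAt (fun t : ℝ => θs + t • d) d 0 := by
      simpa using (hasDerivAt_id (0:ℝ)).smul_const d |>.const_add θs
    have hcomp : HasDerivAt (fun t : ℝ => F i (θs + t • d)) (fderiv ℝ (F i) θs d) 0 := by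
      have hdiff' : HasFDerivAt (F i) (fderiv ℝ (F i) θs) (θs + (0:ℝ) • d) := by
        simpa using hdiff
      exact hdiff'.comp_hasDerivAt 0 hcurve
    have hslope := hasDerivAt_iff_tendsto_slope.mp hcomp
    have hslope' : Filter.Tendsto (slope (fun t : ℝ => F i (θs + t • d)) 0) (𝓝[>] 0)
        (𝓝 (fderiv ℝ (F i) θs d)) :=
      hslope.mono_left (nhdsWithin_mono 0 fun t ht => ne_of_gt ht)
    have : ∀ᶠ t : ℝ in 𝓝[>] 0,
        slope (fun t : ℝ => F i (θs + t • d)) 0 t < 0 :=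
      hslope'.eventually_lt tendsto_const_nhds (hneg i)
    filter_upwards [this, self_mem_nhdsWithin] with t hts ht
    have ht0 : (0:ℝ) < t := ht
    rw [slope_def_field] at hts
    have h := mul_neg_of_neg_of_pos hts (show (0:ℝ) < t - 0 by simpa using ht0)
    rw [div_mul_cancel₀ _ (by simpa using ht0.ne' : t - 0 ≠ 0)] at h
    have : F i (θs + t • d) - F i θs < 0 := by simpa using h
    linarith
  have hall : ∀ᶠ t : ℝ in 𝓝[>] 0, ∀ i, F i (θs + t • d) < F i θs :=
    eventually_all.mpr hev
  obtain ⟨t, ht⟩ := hall.exists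
  exact hweak ⟨θs + t • d, ht⟩
end

section
/- Let f_1, ..., f_m : ℝ^n → ℝ be differentiable, g_1, ..., g_m : ℝ^n → ℝ be convex and continuous, h > 0, and for θ ∈ ℝ^n define ψ_θ(d) = max_{i=1,...,m} { ⟨∇f_i(θ), d⟩ + g_i(θ + d) − g_i(θ) }. Then d = 0 is a global minimizer of d ↦ ψ_θ(d) + (1/(2h))‖d‖_2^2 if and only if θ is Pareto critical for the objectives F_i = f_i + g_i, i.e., if and only if there exist λ_1, ..., λ_m ≥ 0 with ∑_{i=1}^m λ_i = 1 and vectors v_1, ..., v_m ∈ ℝ^n with each v_i a subgradient of g_i at θ such that ∑_{i=1}^m λ_i (∇f_i(θ) + v_i) = 0. -/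
open RealInnerProductSpace

section Aux
variable {E : Type*} [NormedAddCommGroup E] [InnerProductSpace ℝ E] [CompleteSpace E]
variable {E : Type*} [NormedAddCommGroup E] [InnerProductSpace ℝ E] [CompleteSpace E]

lemma convexOn_translate {g : E → ℝ} (hg : ConvexOn ℝ Set.univ g) (θ : E) (c : ℝ) (s : ℝ) :
    ConvexOn ℝ Set.univ (fun d => g (θ + s • d) - c) := by
  refine ⟨convex_univ, ?_⟩
  intro x _ y _ a b ha hb hab
  have key : θ + s • (a • x + b • y) = a • (θ + s • x) + b • (θ + s • y) := by
    have hθ : θ = a • θ + b • θ := by rw [← add_smul, hab, one_smul]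
    rw [smul_add, smul_add, smul_add, smul_smul, smul_smul, smul_smul, smul_smul,
      mul_comm a s, mul_comm b s]
    conv_lhs => rw [hθ]
    abel
  simp only [smul_eq_mul]
  rw [key]
  have h1 := hg.2 (Set.mem_univ (θ + s • x)) (Set.mem_univ (θ + s • y)) ha hb hab
  simp only [smul_eq_mul] at h1
  have hc : a * c + b * c = c := by rw [← add_mul, hab, one_mul]
  linarith

/-- Moreau–Rockafellar style decomposition for two convex continuous functions. -/
lemma mr2 {φ χ : E → ℝ} (hφ : ConvexOn ℝ Set.univ φ) (hχ : ConvexOn ℝ Set.univ χ)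
    (hφc : Continuous φ) (hφ0 : φ 0 = 0) (hχ0 : χ 0 = 0)
    {u : E} (hsum : ∀ d, ⟪u, d⟫ ≤ φ d + χ d) :
    ∃ a : E, (∀ d, ⟪a, d⟫ ≤ φ d) ∧ (∀ d, ⟪u - a, d⟫ ≤ χ d) := by
  set A : Set (E × ℝ) := {p | φ p.1 < p.2} with hA
  set B : Set (E × ℝ) := {p | p.2 ≤ ⟪u, p.1⟫ - χ p.1} with hB
  have hAopen : IsOpen A := isOpen_lt (hφc.comp continuous_fst) continuous_snd
  have hAconv : Convex ℝ A := by
    intro p hp q hq a b ha hb hab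
    simp only [hA, Set.mem_setOf_eq, Prod.fst_add, Prod.snd_add, Prod.smul_fst, Prod.smul_snd,
      smul_eq_mul] at *
    have h1 : φ (a • p.1 + b • q.1) ≤ a * φ p.1 + b * φ q.1 := by
      simpa using hφ.2 (Set.mem_univ p.1) (Set.mem_univ q.1) ha hb hab
    rcases eq_or_lt_of_le ha with h | h
    · have hb1 : b = 1 := by linarith
      calc φ (a • p.1 + b • q.1) ≤ a * φ p.1 + b * φ q.1 := h1
        _ < a * p.2 + b * q.2 := by rw [← h, hb1]; simpa using hq
    · calc φ (a • p.1 + b • q.1) ≤ a * φ p.1 + b * φ q.1 := h1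
        _ < a * p.2 + b * q.2 := by
            have := mul_lt_mul_of_pos_left hp h
            have := mul_le_mul_of_nonneg_left hq.le hb
            linarith
  have hBconv : Convex ℝ B := by
    intro p hp q hq a b ha hb hab
    simp only [hB, Set.mem_setOf_eq, Prod.fst_add, Prod.snd_add, Prod.smul_fst, Prod.smul_snd,
      smul_eq_mul] at *
    have h1 : χ (a • p.1 + b • q.1) ≤ a * χ p.1 + b * χ q.1 := by
      simpa using hχ.2 (Set.mem_univ p.1) (Set.mem_univ q.1) ha hb hab
    have h2 : ⟪u, a • p.1 + b • q.1⟫ = a * ⟪u, p.1⟫ + b * ⟪u, q.1⟫ := by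
      rw [inner_add_right, real_inner_smul_right, real_inner_smul_right]
    have := mul_le_mul_of_nonneg_left hp ha
    have := mul_le_mul_of_nonneg_left hq hb
    rw [h2]; linarith
  have hdisj : Disjoint A B := by
    rw [Set.disjoint_left]
    intro p hp hq
    simp only [hA, hB, Set.mem_setOf_eq] at hp hq
    have := hsum p.1
    linarith
  obtain ⟨L, c, hLA, hLB⟩ := geometric_hahn_banach_open hAconv hAopen hBconv hdisj
  set σ : ℝ := L (0, 1) with hσ
  have hLdec : ∀ (d : E) (t : ℝ), L (d, t) = L (d, 0) + t * σ := by
    intro d t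
    have : (d, t) = (d, (0:ℝ)) + t • ((0:E), (1:ℝ)) := by
      simp [Prod.ext_iff]
    rw [this, map_add, map_smul, smul_eq_mul, hσ]
  have hAmem : ∀ (d : E) (t : ℝ), φ d < t → L (d, 0) + t * σ < c := fun d t ht => by
    rw [← hLdec]; exact hLA _ ht
  have hBmem : ∀ (d : E) (t : ℝ), t ≤ ⟪u, d⟫ - χ d → c ≤ L (d, 0) + t * σ := fun d t ht => by
    rw [← hLdec]; exact hLB _ ht
  have hL00 : L ((0:E), (0:ℝ)) = 0 := by exact map_zero L
  have hσle : σ ≤ 0 := by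
    by_contra hpos
    push_neg at hpos
    set t := max 1 ((c + 1) / σ) with ht
    have htpos : φ 0 < t := by
      rw [hφ0]; exact lt_of_lt_of_le one_pos (le_max_left _ _)
    have h1 := hAmem 0 t htpos
    have h2 : (c + 1) / σ * σ ≤ t * σ := mul_le_mul_of_nonneg_right (le_max_right _ _) hpos.le
    rw [div_mul_cancel₀ _ (ne_of_gt hpos)] at h2
    rw [hL00] at h1
    linarith
  have hσne : σ ≠ 0 := by
    intro h0
    have hlt : ∀ d : E, L (d, 0) < c := by
      intro d
      have := hAmem d (φ d + 1) (by linarith)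
      rw [h0] at this; linarith
    have hzero : ∀ d : E, L (d, 0) ≤ 0 := by
      intro d
      by_contra hd
      push_neg at hd
      have h3 := hlt ((c / L (d, 0) + 1) • d)
      have hsm : L (((c / L (d, 0) + 1) • d), (0:ℝ)) = (c / L (d, 0) + 1) * L (d, 0) := by
        have he : (((c / L (d, 0) + 1) • d), (0:ℝ)) = (c / L (d, 0) + 1) • (d, (0:ℝ)) := by
          simp [Prod.ext_iff]
        rw [he, map_smul, smul_eq_mul]
      rw [hsm] at h3
      have h4 : (c / L (d, 0) + 1) * L (d, 0) = c + L (d, 0) := by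
        field_simp
      linarith
    have hc1 : (0:ℝ) < c := by
      have := hAmem 0 1 (by rw [hφ0]; norm_num)
      rw [hL00, h0] at this; linarith
    have hc2 : c ≤ 0 := by
      have := hBmem 0 0 (by simp [hχ0])
      rw [hL00, h0] at this; linarith
    linarith
  have hσlt : σ < 0 := lt_of_le_of_ne hσle hσne
  have hσpos : (0:ℝ) < -σ := by linarith
  have hkey1 : ∀ d : E, L (d, 0) + φ d * σ ≤ c := by
    intro d
    by_contra hd
    push_neg at hd
    have hε : (0:ℝ) < (L (d, 0) + φ d * σ - c) / (-σ) :=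
      div_pos (by linarith) hσpos
    have h1 := hAmem d (φ d + (L (d, 0) + φ d * σ - c) / (-σ)) (by linarith)
    have h2 : (L (d, 0) + φ d * σ - c) / (-σ) * σ = -(L (d, 0) + φ d * σ - c) := by
      rw [div_mul_eq_mul_div, mul_div_assoc, div_neg, div_self hσne, mul_neg_one]
    rw [add_mul, h2] at h1
    linarith
  have hc0 : c = 0 := by
    have h1 : L ((0:E), 0) + φ 0 * σ ≤ c := hkey1 0
    have h2 : c ≤ L ((0:E), 0) + 0 * σ := hBmem 0 0 (by simp [hχ0])
    rw [hL00, hφ0] at h1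
    rw [hL00] at h2
    linarith
  set ℓ : E →L[ℝ] ℝ := L.comp (ContinuousLinearMap.inl ℝ E ℝ) with hℓ
  have hℓapp : ∀ d : E, ℓ d = L (d, 0) := fun d => rfl
  set a : E := (-σ)⁻¹ • (InnerProductSpace.toDual ℝ E).symm ℓ with ha
  have haapp : ∀ d : E, ⟪a, d⟫ = (-σ)⁻¹ * L (d, 0) := by
    intro d
    rw [ha, real_inner_smul_left, InnerProductSpace.toDual_symm_apply, hℓapp]
  refine ⟨a, fun d => ?_, fun d => ?_⟩
  · have h1 := hkey1 d
    rw [hc0] at h1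
    rw [haapp, inv_mul_le_iff₀ hσpos]
    nlinarith [h1]
  · have h2 := hBmem d (⟪u, d⟫ - χ d) le_rfl
    rw [hc0] at h2
    rw [inner_sub_left, haapp]
    have h4 : (⟪u, d⟫ - χ d) * (-σ) ≤ L (d, 0) := by nlinarith [h2]
    have h5 := mul_le_mul_of_nonneg_left h4 (inv_nonneg.2 hσpos.le)
    rw [mul_comm (⟪u, d⟫ - χ d) (-σ), ← mul_assoc, inv_mul_cancel₀ (ne_of_gt hσpos),
      one_mul] at h5
    linarith

/-- Every continuous convex function has a subgradient at every point. -/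
lemma exists_subgradient {g : E → ℝ} (hg : ConvexOn ℝ Set.univ g) (hc : Continuous g) (θ : E) :
    ∃ v : E, ∀ φ', g θ + ⟪v, φ' - θ⟫ ≤ g φ' := by
  have key : ∀ d : E, ⟪(0:E), d⟫ ≤ (g (θ + d) - g θ) + (g (θ + (-1 : ℝ) • d) - g θ) := by
    intro d
    have h2 := hg.2 (Set.mem_univ (θ + d)) (Set.mem_univ (θ + (-1 : ℝ) • d))
      (by norm_num : (0:ℝ) ≤ 1/2) (by norm_num : (0:ℝ) ≤ 1/2) (by norm_num)
    have he : (1/2 : ℝ) • (θ + d) + (1/2 : ℝ) • (θ + (-1 : ℝ) • d) = θ := by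
      module
    rw [he] at h2
    simp only [smul_eq_mul] at h2
    simp only [inner_zero_left]
    linarith
  have hφconv : ConvexOn ℝ Set.univ (fun d => g (θ + d) - g θ) := by
    have := convexOn_translate hg θ (g θ) 1
    simpa using this
  have hχconv : ConvexOn ℝ Set.univ (fun d => g (θ + (-1 : ℝ) • d) - g θ) :=
    convexOn_translate hg θ (g θ) (-1)
  obtain ⟨a, h1, -⟩ := mr2 hφconv hχconv
    ((hc.comp (continuous_const.add continuous_id)).sub continuous_const)
    (by simp) (by simp) key
  refine ⟨a, fun φ' => ?_⟩
  have := h1 (φ' - θ)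
  simp only [add_sub_cancel] at this
  linarith


omit [CompleteSpace E] in
lemma convexOn_finset_sum {ι : Type*} (s : Finset ι) (φ : ι → E → ℝ)
    (hc : ∀ i ∈ s, ConvexOn ℝ Set.univ (φ i)) :
    ConvexOn ℝ Set.univ (fun x => ∑ i ∈ s, φ i x) := by
  classical
  induction s using Finset.induction_on with
  | empty => simpa using convexOn_const (0:ℝ) convex_univ
  | @insert a s ha ih =>
    have h1 : ConvexOn ℝ Set.univ (fun x => φ a x + ∑ i ∈ s, φ i x) :=
      (hc a (Finset.mem_insert_self a s)).add
        (ih fun i hi => hc i (Finset.mem_insert_of_mem hi))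
    simpa [Finset.sum_insert ha] using h1

lemma sum_rule {ι : Type*} [DecidableEq ι] (s : Finset ι) (φ : ι → E → ℝ)
    (hc : ∀ i ∈ s, ConvexOn ℝ Set.univ (φ i)) (hcont : ∀ i ∈ s, Continuous (φ i))
    (h0 : ∀ i ∈ s, φ i 0 = 0)
    (u : E) (hsum : ∀ d, ⟪u, d⟫ ≤ ∑ i ∈ s, φ i d) :
    ∃ v : ι → E, (∀ i ∈ s, ∀ d, ⟪v i, d⟫ ≤ φ i d) ∧ ∑ i ∈ s, v i = u := by
  induction s using Finset.induction_on generalizing u with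
  | empty =>
    have hu : u = 0 := by
      have := hsum u
      simp only [Finset.sum_empty] at this
      exact (real_inner_self_nonpos).1 this
    exact ⟨fun _ => 0, by simp, by simp [hu]⟩
  | @insert a s ha ih =>
    have hmem := Finset.mem_insert_self a s
    have hχconv : ConvexOn ℝ Set.univ (fun d => ∑ i ∈ s, φ i d) :=
      convexOn_finset_sum s φ fun i hi => hc i (Finset.mem_insert_of_mem hi)
    have hχcont : Continuous (fun d => ∑ i ∈ s, φ i d) :=
      continuous_finset_sum s fun i hi => hcont i (Finset.mem_insert_of_mem hi)
    have hχ0 : (fun d => ∑ i ∈ s, φ i d) 0 = 0 := by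
      simp only
      exact Finset.sum_eq_zero fun i hi => h0 i (Finset.mem_insert_of_mem hi)
    have hsum' : ∀ d, ⟪u, d⟫ ≤ φ a d + ∑ i ∈ s, φ i d := by
      intro d
      have := hsum d
      rwa [Finset.sum_insert ha] at this
    obtain ⟨w, hw1, hw2⟩ := mr2 (hc a hmem) hχconv (hcont a hmem) (h0 a hmem) hχ0 hsum'
    obtain ⟨v', hv'1, hv'2⟩ := ih (fun i hi => hc i (Finset.mem_insert_of_mem hi))
      (fun i hi => hcont i (Finset.mem_insert_of_mem hi))
      (fun i hi => h0 i (Finset.mem_insert_of_mem hi)) (u - w) hw2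
    refine ⟨Function.update v' a w, ?_, ?_⟩
    · intro i hi d
      rcases Finset.mem_insert.1 hi with rfl | hi'
      · rw [Function.update_self]; exact hw1 d
      · rw [Function.update_of_ne (by rintro rfl; exact ha hi') _ _]; exact hv'1 i hi' d
    · rw [Finset.sum_insert ha, Function.update_self]
      have : ∑ i ∈ s, Function.update v' a w i = ∑ i ∈ s, v' i :=
        Finset.sum_congr rfl fun i hi => Function.update_of_ne (by rintro rfl; exact ha hi) _ _
      rw [this, hv'2]
      abel

omit [CompleteSpace E] in
lemma convex_strict_combo {F : E → ℝ} (hF : ConvexOn ℝ Set.univ F) {x y : E} {p q a b : ℝ}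
    (hx : F x < p) (hy : F y < q) (ha : 0 ≤ a) (hb : 0 ≤ b) (hab : a + b = 1) :
    F (a • x + b • y) < a * p + b * q := by
  have h1 := hF.2 (Set.mem_univ x) (Set.mem_univ y) ha hb hab
  simp only [smul_eq_mul] at h1
  rcases eq_or_lt_of_le ha with h | h
  · have hb1 : b = 1 := by linarith
    rw [← h, hb1] at *
    simp only [zero_mul, one_mul, zero_smul, zero_add, one_smul] at *
    linarith
  · have := mul_lt_mul_of_pos_left hx h
    have := mul_le_mul_of_nonneg_left hy.le hb
    linarith
end Aux

noncomputable def mpgPsi {n m : ℕ} [NeZero m]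
    (f g : Fin m → EuclideanSpace ℝ (Fin n) → ℝ)
    (θ d : EuclideanSpace ℝ (Fin n)) : ℝ :=
  Finset.univ.sup' Finset.univ_nonempty
    fun i => ⟪gradient (f i) θ, d⟫ + g i (θ + d) - g i θ

set_option maxHeartbeats 1000000 in
/-- `d = 0` is a global minimizer of the multiobjective proximal gradient subproblem
at `θ` if and only if `θ` is Pareto critical for the objectives `F_i = f_i + g_i`. -/
theorem mpg_subproblem_zero_min_iff_pareto_critical
    {n m : ℕ} [NeZero m]
    (f g : Fin m → EuclideanSpace ℝ (Fin n) → ℝ)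
    (hf : ∀ i, Differentiable ℝ (f i))
    (hg : ∀ i, ConvexOn ℝ Set.univ (g i)) (hgc : ∀ i, Continuous (g i))
    (h : ℝ) (hh : 0 < h) (θ : EuclideanSpace ℝ (Fin n)) :
    (∀ d : EuclideanSpace ℝ (Fin n),
        mpgPsi f g θ 0 + (1 / (2 * h)) * ‖(0 : EuclideanSpace ℝ (Fin n))‖ ^ 2 ≤
          mpgPsi f g θ d + (1 / (2 * h)) * ‖d‖ ^ 2) ↔
    (∃ (lam : Fin m → ℝ) (v : Fin m → EuclideanSpace ℝ (Fin n)),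
      (∀ i, 0 ≤ lam i) ∧ ∑ i, lam i = 1 ∧
      (∀ i, ∀ φ, g i θ + ⟪v i, φ - θ⟫ ≤ g i φ) ∧
      ∑ i, lam i • (gradient (f i) θ + v i) = 0) := by
  classical
  set w : Fin m → (EuclideanSpace ℝ (Fin n)) := fun i => gradient (f i) θ with hw
  set F : Fin m → (EuclideanSpace ℝ (Fin n)) → ℝ := fun i d => ⟪w i, d⟫ + g i (θ + d) - g i θ with hF
  have hψ : ∀ d, mpgPsi f g θ d = Finset.univ.sup' Finset.univ_nonempty (fun i => F i d) :=
    fun d => rfl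
  have hψ0 : mpgPsi f g θ 0 = 0 := by
    rw [hψ]
    have : (fun i : Fin m => F i 0) = fun _ => (0:ℝ) := by
      funext i; simp [hF]
    rw [this, Finset.sup'_const]
  have hc : (0:ℝ) < 1/(2*h) := by positivity
  have hFψ : ∀ i d, F i d ≤ mpgPsi f g θ d := by
    intro i d
    rw [hψ]
    exact Finset.le_sup' (fun j => F j d) (Finset.mem_univ i)
  have hF0 : ∀ i, F i 0 = 0 := by intro i; simp [hF]
  have hFconv : ∀ i, ConvexOn ℝ Set.univ (F i) := by
    intro i
    have h1 : ConvexOn ℝ Set.univ (fun d : (EuclideanSpace ℝ (Fin n)) => ⟪w i, d⟫) := by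
      refine ⟨convex_univ, ?_⟩
      intro x _ y _ a b ha hb hab
      dsimp only
      rw [inner_add_right, real_inner_smul_right, real_inner_smul_right]
      simp [smul_eq_mul]
    have h2 := convexOn_translate (hg i) θ (g i θ) 1
    simp only [one_smul] at h2
    have heq : F i = (fun d : (EuclideanSpace ℝ (Fin n)) => ⟪w i, d⟫) + fun d => g i (θ + d) - g i θ := by
      funext d
      simp only [hF, Pi.add_apply]
      ring
    rw [heq]
    exact h1.add h2
  constructor
  · -- forward direction
    intro hmin
    have hmin' : ∀ d : (EuclideanSpace ℝ (Fin n)), 0 ≤ mpgPsi f g θ d + 1/(2*h) * ‖d‖^2 := by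
      intro d
      have := hmin d
      rw [hψ0] at this
      simpa using this
    have hψnonneg : ∀ d : (EuclideanSpace ℝ (Fin n)), 0 ≤ mpgPsi f g θ d := by
      intro d
      by_contra hneg
      push_neg at hneg
      set c := 1/(2*h) with hcdef
      set D := ‖d‖^2 with hD
      have hDnn : 0 ≤ D := by positivity
      set ψd := mpgPsi f g θ d with hψd
      set t := min 1 ((-ψd)/(2*(c*D+1))) with ht
      have htpos : 0 < t := by
        apply lt_min one_pos
        apply div_pos (by linarith) (by positivity)
      have ht1 : t ≤ 1 := min_le_left _ _
      have ht2 : t * (2*(c*D+1)) ≤ -ψd := by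
        rw [← le_div_iff₀ (by positivity)]
        exact min_le_right _ _
      have hscale : mpgPsi f g θ (t • d) ≤ t * ψd := by
        rw [hψ]
        apply Finset.sup'_le
        intro i _
        have hid : θ + t • d = t • (θ + d) + (1 - t) • θ := by module
        have hgi := (hg i).2 (Set.mem_univ (θ + d)) (Set.mem_univ θ) htpos.le
          (by linarith : (0:ℝ) ≤ 1 - t) (by ring)
        simp only [smul_eq_mul] at hgi
        have hFi : F i (t • d) ≤ t * F i d := by
          simp only [hF, real_inner_smul_right]
          rw [hid]
          nlinarith [hgi]
        calc F i (t • d) ≤ t * F i d := hFi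
          _ ≤ t * ψd := mul_le_mul_of_nonneg_left (hFψ i d) htpos.le
      have hnorm : ‖t • d‖^2 = t^2 * D := by
        rw [norm_smul, mul_pow, hD, Real.norm_eq_abs, sq_abs]
      have h5 := hmin' (t • d)
      rw [hnorm] at h5
      -- 0 ≤ ψ(td) + c t² D ≤ t ψd + c t² D, divide by t
      have h6 : 0 ≤ ψd + c * t * D := by
        have h7 : 0 ≤ t * ψd + c * (t^2*D) := by linarith [hscale, h5]
        have h8 : 0 ≤ t * (ψd + c * t * D) := by nlinarith [h7]
        nlinarith [h8, htpos]
      nlinarith [h6, ht2, htpos, hDnn, hc, mul_pos htpos htpos]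
    -- Gordan argument
    set K : Set (Fin m → ℝ) := ⋃ d : (EuclideanSpace ℝ (Fin n)), {y | ∀ i, F i d < y i} with hK
    have hKopen : IsOpen K := by
      apply isOpen_iUnion
      intro d
      have heq : {y : Fin m → ℝ | ∀ i, F i d < y i}
          = ⋂ i, (fun y : Fin m → ℝ => y i) ⁻¹' Set.Ioi (F i d) := by
        ext y; simp [Set.mem_iInter]
      rw [heq]
      exact isOpen_iInter_of_finite fun i => isOpen_Ioi.preimage (continuous_apply i)
    have hKconv : Convex ℝ K := by
      intro y1 hy1 y2 hy2 a b ha hb hab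
      rw [hK, Set.mem_iUnion] at hy1 hy2 ⊢
      obtain ⟨d1, hd1⟩ := hy1
      obtain ⟨d2, hd2⟩ := hy2
      refine ⟨a • d1 + b • d2, fun i => ?_⟩
      have := convex_strict_combo (hFconv i) (hd1 i) (hd2 i) ha hb hab
      simpa using this
    have h0K : (0 : Fin m → ℝ) ∉ K := by
      intro h0
      rw [hK, Set.mem_iUnion] at h0
      obtain ⟨d, hd⟩ := h0
      have : mpgPsi f g θ d < 0 := by
        rw [hψ, Finset.sup'_lt_iff]
        intro i _
        simpa using hd i
      linarith [hψnonneg d]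
    obtain ⟨L, hL⟩ := geometric_hahn_banach_point_open hKconv hKopen h0K
    set μ : Fin m → ℝ := fun i => L (Pi.single i 1) with hμ
    have hLsum : ∀ y : Fin m → ℝ, L y = ∑ i, y i * μ i := by
      intro y
      have hy : (∑ i, y i • (Pi.single i (1:ℝ) : Fin m → ℝ)) = y := by
        have hterm : ∀ i : Fin m, y i • (Pi.single i (1:ℝ) : Fin m → ℝ) = Pi.single i (y i) := by
          intro i; rw [← Pi.single_smul, smul_eq_mul, mul_one]
        rw [Finset.sum_congr rfl fun i _ => hterm i, Finset.univ_sum_single]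
      calc L y = L (∑ i, y i • (Pi.single i (1:ℝ) : Fin m → ℝ)) := by rw [hy]
        _ = ∑ i, y i * μ i := by
            rw [map_sum]
            exact Finset.sum_congr rfl fun i _ => by rw [map_smul, smul_eq_mul, hμ]
    have hmemK : ∀ (d : (EuclideanSpace ℝ (Fin n))) (y : Fin m → ℝ), (∀ i, F i d < y i) → 0 < ∑ i, y i * μ i := by
      intro d y hy
      have hyK : y ∈ K := Set.mem_iUnion.2 ⟨d, hy⟩
      have := hL y hyK
      rwa [map_zero, hLsum] at this
    set S := ∑ i, μ i with hS
    have hSpos : 0 < S := by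
      have := hmemK 0 (fun _ => 1) (fun i => by rw [hF0 i]; norm_num)
      simpa [hS] using this
    have hμnn : ∀ i, 0 ≤ μ i := by
      intro i
      by_contra hi
      push_neg at hi
      set t := 1 + (S+1)/(-μ i) with ht
      have htpos : (0:ℝ) < t := by
        rw [ht]
        have h1 : 0 < (S+1)/(-μ i) := div_pos (by linarith) (by linarith)
        linarith
      have hmem := hmemK 0 (fun j => if j = i then t else 1) (fun j => by
        rw [hF0 j]; split <;> [exact htpos; norm_num])
      have hsplit : ∑ j, (if j = i then t else 1) * μ j
          = S + (t - 1) * μ i := by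
        have : ∀ j : Fin m, (if j = i then t else 1) * μ j
            = μ j + (if j = i then (t-1) * μ j else 0) := by
          intro j; split <;> ring
        rw [Finset.sum_congr rfl fun j _ => this j, Finset.sum_add_distrib,
          Finset.sum_ite_eq' Finset.univ i (fun j => (t-1) * μ j)]
        simp [hS]
      have hval : (t - 1) * μ i = -(S+1) := by
        have hne : μ i ≠ 0 := ne_of_lt hi
        rw [ht, add_sub_cancel_left, div_mul_eq_mul_div, mul_div_assoc, div_neg,
          div_self hne, mul_neg_one]
      rw [hsplit, hval] at hmem
      linarith
    have hμF : ∀ d : (EuclideanSpace ℝ (Fin n)), 0 ≤ ∑ i, μ i * F i d := by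
      intro d
      by_contra hA
      push_neg at hA
      set A := ∑ i, μ i * F i d with hAdef
      set ε := -A/(2*S) with hε
      have hεpos : 0 < ε := div_pos (by linarith) (by linarith)
      have hmem := hmemK d (fun i => F i d + ε) (fun i => by linarith)
      have hexp : ∑ i, (F i d + ε) * μ i = A + ε * S := by
        rw [hAdef, hS, Finset.mul_sum]
        rw [← Finset.sum_add_distrib]
        exact Finset.sum_congr rfl fun i _ => by ring
      rw [hexp] at hmem
      have hεS : ε * S = -A/2 := by
        rw [hε, div_mul_eq_mul_div, mul_comm (2:ℝ) S, ← div_div,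
          mul_div_assoc, div_self hSpos.ne', mul_one]
      linarith [hmem, hεS]
    -- normalize
    set lam : Fin m → ℝ := fun i => μ i / S with hlam
    have hlamnn : ∀ i, 0 ≤ lam i := fun i => div_nonneg (hμnn i) hSpos.le
    have hlam1 : ∑ i, lam i = 1 := by
      rw [hlam, ← Finset.sum_div, ← hS, div_self hSpos.ne']
    have hlamF : ∀ d : (EuclideanSpace ℝ (Fin n)), 0 ≤ ∑ i, lam i * F i d := by
      intro d
      have heq : ∑ i, lam i * F i d = (∑ i, μ i * F i d) / S := by
        rw [Finset.sum_div]
        exact Finset.sum_congr rfl fun i _ => by rw [hlam]; ring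
      rw [heq]
      exact div_nonneg (hμF d) hSpos.le
    -- sum rule application
    set G : Fin m → (EuclideanSpace ℝ (Fin n)) → ℝ := fun i d => lam i * (g i (θ + d) - g i θ) with hG
    have hGconv : ∀ i ∈ Finset.univ, ConvexOn ℝ Set.univ (G i) := by
      intro i _
      have h2 := convexOn_translate (hg i) θ (g i θ) 1
      simp only [one_smul] at h2
      have h3 := h2.smul (hlamnn i)
      exact h3
    have hGcont : ∀ i ∈ Finset.univ, Continuous (G i) := by
      intro i _
      exact continuous_const.mul (((hgc i).comp (continuous_const.add continuous_id)).sub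
        continuous_const)
    have hG0 : ∀ i ∈ Finset.univ, G i 0 = 0 := by intro i _; simp [hG]
    set u : (EuclideanSpace ℝ (Fin n)) := -∑ i, lam i • w i with hu
    have husum : ∀ d : (EuclideanSpace ℝ (Fin n)), ⟪u, d⟫ ≤ ∑ i, G i d := by
      intro d
      have h1 : ⟪u, d⟫ = -∑ i, lam i * ⟪w i, d⟫ := by
        rw [hu, inner_neg_left, sum_inner]
        congr 1
        exact Finset.sum_congr rfl fun i _ => by rw [real_inner_smul_left]
      have h2 : ∑ i, lam i * F i d
          = ∑ i, lam i * ⟪w i, d⟫ + ∑ i, G i d := by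
        rw [← Finset.sum_add_distrib]
        refine Finset.sum_congr rfl fun i _ => ?_
        simp only [hF, hG]
        ring
      have := hlamF d
      rw [h2] at this
      rw [h1]
      linarith
    obtain ⟨vraw, hvraw1, hvraw2⟩ := sum_rule Finset.univ G hGconv hGcont hG0 u husum
    have hvzero : ∀ i, lam i = 0 → vraw i = 0 := by
      intro i hi
      apply real_inner_self_nonpos.1
      have := hvraw1 i (Finset.mem_univ i) (vraw i)
      simpa [hG, hi] using this
    choose sg hsg using fun i => exists_subgradient (hg i) (hgc i) θ
    set v : Fin m → (EuclideanSpace ℝ (Fin n)) := fun i => if lam i = 0 then sg i else (lam i)⁻¹ • vraw i with hv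
    refine ⟨lam, v, hlamnn, hlam1, ?_, ?_⟩
    · intro i φ'
      by_cases hi0 : lam i = 0
      · have hvi : v i = sg i := by rw [hv]; simp [hi0]
        rw [hvi]
        exact hsg i φ'
      · have hvi : v i = (lam i)⁻¹ • vraw i := by rw [hv]; simp [hi0]
        have hpos : 0 < lam i := lt_of_le_of_ne (hlamnn i) (Ne.symm hi0)
        have h1 := hvraw1 i (Finset.mem_univ i) (φ' - θ)
        simp only [hG] at h1
        rw [hvi, real_inner_smul_left]
        have h2 := mul_le_mul_of_nonneg_left h1 (inv_nonneg.2 hpos.le)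
        rw [← mul_assoc, inv_mul_cancel₀ hpos.ne', one_mul] at h2
        have h3 : θ + (φ' - θ) = φ' := by abel
        rw [h3] at h2
        linarith
    · have hsplit : ∑ i, lam i • (w i + v i) = ∑ i, lam i • w i + ∑ i, lam i • v i := by
        rw [← Finset.sum_add_distrib]
        exact Finset.sum_congr rfl fun i _ => smul_add _ _ _
      have hveq : ∑ i, lam i • v i = ∑ i, vraw i := by
        refine Finset.sum_congr rfl fun i _ => ?_
        by_cases hi0 : lam i = 0
        · have hvi : v i = sg i := by rw [hv]; simp [hi0]
          rw [hvi, hi0, hvzero i hi0, zero_smul]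
        · have hvi : v i = (lam i)⁻¹ • vraw i := by rw [hv]; simp [hi0]
          rw [hvi, smul_smul, mul_inv_cancel₀ hi0, one_smul]
      rw [hsplit, hveq, hvraw2, hu]
      abel
  · -- reverse direction
    rintro ⟨lam, v, hl0, hl1, hsub, hsum0⟩ d
    have key : (0:ℝ) ≤ mpgPsi f g θ d := by
      have h1 : ∀ i, lam i * (⟪w i, d⟫ + ⟪v i, d⟫) ≤ lam i * F i d := by
        intro i
        apply mul_le_mul_of_nonneg_left _ (hl0 i)
        have := hsub i (θ + d)
        rw [add_sub_cancel_left] at this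
        simp only [hF]
        linarith
      have h2 : ∑ i, lam i * (⟪w i, d⟫ + ⟪v i, d⟫)
          = ⟪∑ i, lam i • (w i + v i), d⟫ := by
        rw [sum_inner]
        refine Finset.sum_congr rfl fun i _ => ?_
        rw [real_inner_smul_left, inner_add_left]
      have h3 : ∑ i, lam i * F i d ≤ mpgPsi f g θ d := by
        calc ∑ i, lam i * F i d ≤ ∑ i, lam i * mpgPsi f g θ d :=
              Finset.sum_le_sum fun i _ => mul_le_mul_of_nonneg_left (hFψ i d) (hl0 i)
          _ = mpgPsi f g θ d := by rw [← Finset.sum_mul, hl1, one_mul]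
      have h4 : ⟪∑ i, lam i • (w i + v i), d⟫ = 0 := by rw [hsum0, inner_zero_left]
      have h5 := Finset.sum_le_sum fun i (_ : i ∈ Finset.univ) => h1 i
      rw [h2, h4] at h5
      linarith
    rw [hψ0]
    have : (0:ℝ) ≤ 1/(2*h) * ‖d‖^2 := by positivity
    simp only [norm_zero]
    nlinarith [key, this]
end

section
/- Let f_1, ..., f_m : ℝ^n → ℝ be differentiable with L-Lipschitz continuous gradients (L > 0), g_1, ..., g_m : ℝ^n → ℝ be convex and continuous, F_i = f_i + g_i, and let 0 < h ≤ 1/L. Let {θ^k} be the multiobjective proximal gradient sequence, i.e., θ^{k+1} = θ^k + d^k where d^k is a global minimizer of d ↦ ψ_{θ^k}(d) + (1/(2h))‖d‖_2^2 with ψ_θ(d) = max_{i=1,...,m} { ⟨∇f_i(θ), d⟩ + g_i(θ + d) − g_i(θ) }. Then for all k and all i = 1, ..., m, F_i(θ^{k+1}) ≤ F_i(θ^k) − (1/(2h) − L/2)‖d^k‖_2^2; in particular each sequence {F_i(θ^k)} is nonincreasing. -/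
open RealInnerProductSpace

lemma descent_lemma {E : Type*} [NormedAddCommGroup E] [InnerProductSpace ℝ E]
    [CompleteSpace E]
    (f : E → ℝ) (hf : Differentiable ℝ f) (L : ℝ)
    (hlip : ∀ θ φ : E, ‖gradient f θ - gradient f φ‖ ≤ L * ‖θ - φ‖)
    (x v : E) : f (x + v) ≤ f x + ⟪gradient f x, v⟫ + L / 2 * ‖v‖ ^ 2 := by
  have hgradcont : Continuous (fun z => gradient f z) := by
    rcases le_or_gt L 0 with hL | hL
    · have heq : ∀ z w : E, gradient f z = gradient f w := by
        intro z w
        have h1 := hlip z w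
        have h2 : L * ‖z - w‖ ≤ 0 := mul_nonpos_of_nonpos_of_nonneg hL (norm_nonneg _)
        have := le_trans h1 h2
        rw [← sub_eq_zero]
        exact norm_le_zero_iff.mp this
      exact (continuous_const (y := gradient f x)).congr fun z => heq x z
    · refine (LipschitzWith.of_dist_le_mul (K := ⟨L, hL.le⟩) ?_).continuous
      intro a b
      rw [dist_eq_norm, dist_eq_norm]; exact hlip a b
  have hpath : Continuous fun t : ℝ => x + t • v := by
    exact continuous_const.add (continuous_id.smul continuous_const)
  have hderiv : ∀ t : ℝ, HasDerivAt (fun t : ℝ => f (x + t • v))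
      ⟪gradient f (x + t • v), v⟫ t := by
    intro t
    have h1 : HasFDerivAt f (InnerProductSpace.toDual ℝ E (gradient f (x + t • v)))
        (x + t • v) := ((hf _).hasGradientAt).hasFDerivAt
    have h2 : HasDerivAt (fun t : ℝ => x + t • v) v t := by
      simpa using ((hasDerivAt_id t).smul_const v).const_add x
    have h3 := h1.comp_hasDerivAt t h2
    rw [InnerProductSpace.toDual_apply_apply] at h3
    exact h3
  have hcont : Continuous fun t : ℝ => ⟪gradient f (x + t • v), v⟫ :=
    (hgradcont.comp hpath).inner continuous_const
  have hint : f (x + v) - f x = ∫ t in (0:ℝ)..1, ⟪gradient f (x + t • v), v⟫ := by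
    have := intervalIntegral.integral_eq_sub_of_hasDerivAt
      (f := fun t : ℝ => f (x + t • v)) (fun t _ => hderiv t)
      (hcont.intervalIntegrable 0 1)
    simpa using this.symm
  have hcont2 : Continuous fun t : ℝ => ⟪gradient f x, v⟫ + L * t * ‖v‖ ^ 2 := by
    exact continuous_const.add ((continuous_const.mul continuous_id).mul continuous_const)
  have hbound : ∫ t in (0:ℝ)..1, ⟪gradient f (x + t • v), v⟫ ≤
      ∫ t in (0:ℝ)..1, (⟪gradient f x, v⟫ + L * t * ‖v‖ ^ 2) := by
    apply intervalIntegral.integral_mono_on (by norm_num)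
      (hcont.intervalIntegrable 0 1) (hcont2.intervalIntegrable 0 1)
    intro t ht
    have h1 : ⟪gradient f (x + t • v) - gradient f x, v⟫ ≤
        ‖gradient f (x + t • v) - gradient f x‖ * ‖v‖ := real_inner_le_norm _ _
    have h2 : ‖gradient f (x + t • v) - gradient f x‖ ≤ L * (t * ‖v‖) := by
      have := hlip (x + t • v) x
      simpa [norm_smul, abs_of_nonneg ht.1] using this
    have h3 : ⟪gradient f (x + t • v) - gradient f x, v⟫ ≤ L * t * ‖v‖ ^ 2 :=
      h1.trans (by nlinarith [norm_nonneg v, mul_le_mul_of_nonneg_right h2 (norm_nonneg v)])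
    have h4 := inner_sub_left (𝕜 := ℝ) (gradient f (x + t • v)) (gradient f x) v
    rw [h4] at h3
    linarith
  have hval : ∫ t in (0:ℝ)..1, (⟪gradient f x, v⟫ + L * t * ‖v‖ ^ 2) =
      ⟪gradient f x, v⟫ + L / 2 * ‖v‖ ^ 2 := by
    have e1 : ∀ t : ℝ, ⟪gradient f x, v⟫ + L * t * ‖v‖ ^ 2
        = ⟪gradient f x, v⟫ + (L * ‖v‖ ^ 2) * t := fun t => by ring
    simp_rw [e1]
    rw [intervalIntegral.integral_add (intervalIntegrable_const)
      (((by fun_prop : Continuous fun t : ℝ => (L * ‖v‖ ^ 2) * t)).intervalIntegrable 0 1)]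
    have : ∫ t in (0:ℝ)..1, (L * ‖v‖ ^ 2) * t = (L * ‖v‖ ^ 2) * ((1:ℝ)^2/2 - 0^2/2) := by
      rw [intervalIntegral.integral_const_mul, integral_id]
      ring
    simp at this
    rw [this]
    simp
    ring
  linarith [hint, hbound, hval]

/-- Sufficient decrease of the multiobjective proximal gradient method: with step size
`0 < h ≤ 1/L`, each objective decreases by at least `(1/(2h) − L/2)‖d^k‖²` per
iteration; in particular each objective value sequence is nonincreasing. -/
theorem mpg_sufficient_decrease
    {n m : ℕ} [NeZero m]
    (f g : Fin m → EuclideanSpace ℝ (Fin n) → ℝ)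
    (hf : ∀ i, Differentiable ℝ (f i)) (L : ℝ) (hL : 0 < L)
    (hlip : ∀ i, ∀ θ φ : EuclideanSpace ℝ (Fin n),
      ‖gradient (f i) θ - gradient (f i) φ‖ ≤ L * ‖θ - φ‖)
    (hg : ∀ i, ConvexOn ℝ Set.univ (g i)) (hgc : ∀ i, Continuous (g i))
    (h : ℝ) (hh : 0 < h) (hhL : h ≤ 1 / L)
    (θ d : ℕ → EuclideanSpace ℝ (Fin n))
    (hstep : ∀ k, θ (k + 1) = θ k + d k)
    (hmin : ∀ k, ∀ e : EuclideanSpace ℝ (Fin n),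
      mpgPsi f g (θ k) (d k) + (1 / (2 * h)) * ‖d k‖ ^ 2 ≤
        mpgPsi f g (θ k) e + (1 / (2 * h)) * ‖e‖ ^ 2) :
    (∀ (k : ℕ) (i : Fin m),
      f i (θ (k + 1)) + g i (θ (k + 1)) ≤
        f i (θ k) + g i (θ k) - (1 / (2 * h) - L / 2) * ‖d k‖ ^ 2) ∧
    (∀ i : Fin m, Antitone fun k => f i (θ k) + g i (θ k)) := by
  have hkey : ∀ (k : ℕ) (i : Fin m),
      f i (θ (k + 1)) + g i (θ (k + 1)) ≤
        f i (θ k) + g i (θ k) - (1 / (2 * h) - L / 2) * ‖d k‖ ^ 2 := by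
    intro k i
    have hpsi0 : mpgPsi f g (θ k) 0 = 0 := by
      have : ∀ i : Fin m, ⟪gradient (f i) (θ k), (0 : EuclideanSpace ℝ (Fin n))⟫ +
          g i (θ k + 0) - g i (θ k) = 0 := fun i => by simp
      unfold mpgPsi
      rw [Finset.sup'_congr Finset.univ_nonempty rfl (fun i _ => this i)]
      simp
    have h1 : mpgPsi f g (θ k) (d k) + (1 / (2 * h)) * ‖d k‖ ^ 2 ≤ 0 := by
      have := hmin k 0
      rw [hpsi0] at this
      simpa using this
    have h2 : ⟪gradient (f i) (θ k), d k⟫ + g i (θ k + d k) - g i (θ k) ≤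
        mpgPsi f g (θ k) (d k) :=
      by
        unfold mpgPsi
        exact Finset.le_sup' (fun i => ⟪gradient (f i) (θ k), d k⟫ + g i (θ k + d k) - g i (θ k))
          (Finset.mem_univ i)
    have h3 : f i (θ k + d k) ≤ f i (θ k) + ⟪gradient (f i) (θ k), d k⟫ +
        L / 2 * ‖d k‖ ^ 2 :=
      descent_lemma (f i) (hf i) L (hlip i) (θ k) (d k)
    rw [hstep k]
    linarith
  refine ⟨hkey, fun i => antitone_nat_of_succ_le fun k => ?_⟩
  have hc : 0 ≤ 1 / (2 * h) - L / 2 := by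
    rw [le_div_iff₀ hL] at hhL
    have h1 : L ≤ 1 / h := by
      rw [le_div_iff₀ hh]; linarith
    have h2 : 1 / (2 * h) = (1 / h) / 2 := by ring
    linarith [h2 ▸ (div_le_div_of_nonneg_right h1 two_pos.le : L / 2 ≤ (1/h)/2)]
  have := hkey k i
  nlinarith [sq_nonneg ‖d k‖, mul_nonneg hc (sq_nonneg ‖d k‖)]
end
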